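/- For K ≥ 2, the class C(K) of permutations obtainable from an identity permutation by one duplication-loss step of width at most K equals the class of permutations avoiding all patterns in B = {321, 3142, 2143} ∪ D, where D is the set of permutations of size K+1 with exactly one descent that do not start with 1 nor end with K+1. Moreover |B| = 3 + 2^{K−1}. -/

import Mathlib

def descents (l : List ℕ) : ℕ :=
  (l.zip l.tail).countP (fun p => decide (p.2 < p.1))
def IsPermList (n : ℕ) (l : List ℕ) : Prop :=
  l.Perm (List.range' 1 n)
def OrderIsoList (a b : List ℕ) : Prop :=
  a.length = b.length ∧
    ∀ i j, i < j → j < a.length → (a.getD i 0 < a.getD j 0 ↔ b.getD i 0 < b.getD j 0)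

def IsPattern (π σ : List ℕ) : Prop :=
  ∃ s, s.Sublist σ ∧ OrderIsoList π s
inductive Interleave : List ℕ → List ℕ → List ℕ → Prop
  | nil : Interleave [] [] []
  | left {x : ℕ} {l a b : List ℕ} : Interleave l a b → Interleave (x :: l) (x :: a) b
  | right {x : ℕ} {l a b : List ℕ} : Interleave l a b → Interleave (x :: l) a (x :: b)

def DLStep (K : ℕ) (τ σ : List ℕ) : Prop :=
  ∃ pre w post w1 w2 : List ℕ, τ = pre ++ w ++ post ∧ w.length ≤ K ∧
    Interleave w w1 w2 ∧ σ = pre ++ (w1 ++ w2) ++ post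

def DLIter (K : ℕ) : ℕ → List ℕ → List ℕ → Prop
  | 0, τ, σ => τ = σ
  | p + 1, τ, σ => ∃ μ, DLStep K τ μ ∧ DLIter K p μ σ

def ObtainableIn (K p : ℕ) (τ σ : List ℕ) : Prop :=
  ∃ q ≤ p, DLIter K q τ σ

def DLBasis (K : ℕ) : Set (List ℕ) :=
  {[3, 2, 1], [3, 1, 4, 2], [2, 1, 4, 3]} ∪
    {d | IsPermList (K + 1) d ∧ descents d = 1 ∧ d.getD 0 0 ≠ 1 ∧ d.getD K 0 ≠ K + 1}

/-!
After a duplication-loss step on an increasing list `τ = pre ++ w ++ post`, the result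
`pre ++ (w₁ ++ w₂) ++ post` is the concatenation of the two increasing runs `pre ++ w₁` and
`w₂ ++ post`, where `pre` lies below and `post` above everything else.

Every sublist of two increasing runs has at most one descent, which excludes `321`, `3142` and
`2143` (two descents each). An occurrence of a pattern of `D` neither starts at its minimum nor
ends at its maximum, so it avoids `pre` and `post` and fits in the window, of length at most `K`.

Conversely, avoiding `321`, `3142`, `2143` leaves at most one descent, so `σ = A ++ B` with
increasing runs `A`, `B`; let `x` be the last entry of `A` and `y` the first of `B`. Sorting `σ`
back only needs to merge the entries of `A` that are `≥ y` with those of `B` that are `≤ x`. If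
there are more than `K` of those, `K - 1` of them together with `x, y` standardize to an
element of `D`.

Finally, the elements of `D` are the lists `sort S ++ sort Sᶜ` with `K + 1 ∈ S` and `1 ∉ S`,
hence there are `2 ^ (K - 1)` of them.
-/

open List

lemma descents_cons_cons (x y : ℕ) (t : List ℕ) :
    descents (x :: y :: t) = (if y < x then 1 else 0) + descents (y :: t) := by
  simp only [descents, tail_cons, zip_cons_cons, countP_cons, decide_eq_true_eq]
  omega

lemma descents_append_cons (u v : List ℕ) (z : ℕ) :
    descents (u ++ z :: v) = descents (u ++ [z]) + descents (z :: v) := by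
  induction u with
  | nil => simp [descents]
  | cons a u ih =>
    obtain ⟨b, w, hb⟩ : ∃ b w, u ++ [z] = b :: w := ⟨_, _, (cons_head_tail (by simp)).symm⟩
    obtain ⟨w', hw'⟩ : ∃ w', u ++ z :: v = b :: w' :=
      ⟨w ++ v, by rw [← singleton_append, ← append_assoc, hb, cons_append]⟩
    rw [cons_append, cons_append, hb, hw', descents_cons_cons, descents_cons_cons, ← hw', ih, ← hb]
    omega

lemma descents_eq_zero_iff {l : List ℕ} : descents l = 0 ↔ l.Pairwise (· ≤ ·) := by
  rw [← isChain_iff_pairwise]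
  induction l with
  | nil => simp [descents]
  | cons x t ih =>
    cases t with
    | nil => simp [descents]
    | cons y t =>
      rw [descents_cons_cons, isChain_cons_cons, ← ih]
      split_ifs <;> omega

lemma descents_append_le_one_of_pairwise {u v : List ℕ} (hu : u.Pairwise (· ≤ ·))
    (hv : v.Pairwise (· ≤ ·)) : descents (u ++ v) ≤ 1 := by
  rcases eq_nil_or_concat' u with rfl | ⟨u, x, rfl⟩
  · simp [descents_eq_zero_iff.2 hv]
  cases v with
  | nil => simp [descents_eq_zero_iff.2 hu]
  | cons y v =>
    rw [append_assoc, singleton_append, descents_append_cons, descents_eq_zero_iff.2 hu,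
      descents_cons_cons, descents_eq_zero_iff.2 hv]
    split_ifs <;> omega

lemma descents_append_eq_one_of_pairwise {u v : List ℕ} (hu : u.Pairwise (· ≤ ·))
    (hv : v.Pairwise (· ≤ ·)) {x y : ℕ} (hx : x ∈ u) (hy : y ∈ v) (hyx : y < x) :
    descents (u ++ v) = 1 := by
  obtain ⟨u, a, rfl⟩ := (eq_nil_or_concat' u).resolve_left (ne_nil_of_mem hx)
  obtain ⟨b, v, rfl⟩ := exists_cons_of_ne_nil (ne_nil_of_mem hy)
  have hxa : x ≤ a := by
    rcases mem_append.1 hx with hx | hx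
    · exact (pairwise_append.1 hu).2.2 x hx a (mem_singleton_self a)
    · rw [mem_singleton.1 hx]
  have hby : b ≤ y := by
    rcases mem_cons.1 hy with rfl | hy
    · rfl
    · exact rel_of_pairwise_cons hv hy
  rw [append_assoc, singleton_append, descents_append_cons, descents_eq_zero_iff.2 hu,
    descents_cons_cons, descents_eq_zero_iff.2 hv, if_pos (by omega)]

lemma exists_first_descent {l : List ℕ} (h : 0 < descents l) :
    ∃ u x y v, l = u ++ x :: y :: v ∧ y < x ∧ (u ++ [x]).Pairwise (· ≤ ·) := by
  induction l with
  | nil => simp [descents] at h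
  | cons a t ih =>
    cases t with
    | nil => simp [descents] at h
    | cons b t =>
      rw [descents_cons_cons] at h
      by_cases hba : b < a
      · exact ⟨[], a, b, t, rfl, hba, by simp⟩
      · rw [if_neg hba] at h
        obtain ⟨u, x, y, v, huv, hyx, hsorted⟩ := ih (by omega)
        refine ⟨a :: u, x, y, v, by rw [huv, cons_append], hyx, ?_⟩
        rw [← descents_eq_zero_iff] at hsorted ⊢
        obtain ⟨w, hw⟩ : ∃ w, u ++ [x] = b :: w := by
          cases u with
          | nil => exact ⟨[], by simp_all⟩
          | cons c u => exact ⟨u ++ [x], by simp_all⟩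
        rw [cons_append, hw, descents_cons_cons, if_neg hba, ← hw, hsorted]

lemma exists_eq_append_of_descents_eq_one {l : List ℕ} (h : descents l = 1) :
    ∃ u x y v, l = u ++ x :: y :: v ∧ y < x ∧ (u ++ [x]).Pairwise (· ≤ ·) ∧
      (y :: v).Pairwise (· ≤ ·) := by
  obtain ⟨u, x, y, v, rfl, hyx, hu⟩ := exists_first_descent (by omega : 0 < descents l)
  refine ⟨u, x, y, v, rfl, hyx, hu, descents_eq_zero_iff.1 ?_⟩
  rw [descents_append_cons, descents_cons_cons, if_pos hyx, descents_eq_zero_iff.2 hu] at h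
  omega

lemma OrderIsoList.of_cons {a b : ℕ} {s t : List ℕ} (h : OrderIsoList (a :: s) (b :: t)) :
    OrderIsoList s t :=
  ⟨by simpa using h.1, fun i j hij hj => by
    simpa using h.2 (i + 1) (j + 1) (by omega) (by simpa using hj)⟩

lemma OrderIsoList.descents_eq {s t : List ℕ} (h : OrderIsoList s t) (hs : s.Nodup)
    (ht : t.Nodup) : descents s = descents t := by
  induction s generalizing t with
  | nil => rw [length_eq_zero_iff.1 h.1.symm]
  | cons a s ih =>
    obtain ⟨b, t, rfl⟩ := exists_cons_of_length_eq_add_one h.1.symm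
    cases s with
    | nil => rw [length_eq_zero_iff.1 (by simpa using h.1.symm : t.length = 0)]; rfl
    | cons a' s =>
      obtain ⟨b', t, rfl⟩ := exists_cons_of_length_eq_add_one (by simpa using h.1.symm)
      have h01 : a < a' ↔ b < b' := by simpa using h.2 0 1 (by omega) (by simp)
      have ha : a ≠ a' := by simp_all
      have hb : b ≠ b' := by simp_all
      have h10 : a' < a ↔ b' < b :=
        ⟨fun h => by have := h01.not.1 (by omega); omega,
          fun h => by have := h01.not.2 (by omega); omega⟩
      rw [descents_cons_cons, descents_cons_cons, ih h.of_cons hs.of_cons ht.of_cons]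
      simp only [h10]

def HeadIsMin (l : List ℕ) : Prop :=
  ∀ j, 0 < j → j < l.length → l.getD 0 0 < l.getD j 0

def LastIsMax (l : List ℕ) : Prop :=
  ∀ i, i + 1 < l.length → l.getD i 0 < l.getD (l.length - 1) 0

lemma headIsMin_cons_iff {a : ℕ} {t : List ℕ} : HeadIsMin (a :: t) ↔ ∀ z ∈ t, a < z := by
  simp only [HeadIsMin, mem_iff_getElem, length_cons, getD_cons_zero]
  constructor
  · rintro h z ⟨j, hj, rfl⟩
    have := h (j + 1) (by omega) (by omega)
    rwa [getD_cons_succ, getD_eq_getElem _ _ hj] at this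
  · intro h j hj0 hj
    obtain ⟨j, rfl⟩ : ∃ i, j = i + 1 := ⟨j - 1, by omega⟩
    rw [getD_cons_succ, getD_eq_getElem _ _ (by omega)]
    exact h _ ⟨j, by omega, rfl⟩

lemma lastIsMax_append_singleton_iff {a : ℕ} {t : List ℕ} :
    LastIsMax (t ++ [a]) ↔ ∀ z ∈ t, z < a := by
  simp only [LastIsMax, mem_iff_getElem, length_append, length_singleton, Nat.add_sub_cancel,
    getD_append_right _ _ _ _ le_rfl, Nat.sub_self, getD_cons_zero]
  constructor
  · rintro h z ⟨i, hi, rfl⟩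
    have := h i (by omega)
    rwa [getD_append _ _ _ _ hi, getD_eq_getElem _ _ hi] at this
  · intro h i hi
    rw [getD_append _ _ _ _ (by omega), getD_eq_getElem _ _ (by omega)]
    exact h _ ⟨i, by omega, rfl⟩

lemma OrderIsoList.headIsMin_iff {s t : List ℕ} (h : OrderIsoList s t) :
    HeadIsMin s ↔ HeadIsMin t := by
  simp only [HeadIsMin, ← h.1]
  exact forall_congr' fun j => imp_congr_right fun hj => imp_congr_right fun hjs =>
    h.2 0 j hj hjs

lemma OrderIsoList.lastIsMax_iff {s t : List ℕ} (h : OrderIsoList s t) :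
    LastIsMax s ↔ LastIsMax t := by
  simp only [LastIsMax, ← h.1]
  exact forall_congr' fun i => imp_congr_right fun hi => h.2 i _ (by omega) (by omega)

lemma IsPermList.nodup {n : ℕ} {d : List ℕ} (hd : IsPermList n d) : d.Nodup :=
  hd.nodup_iff.2 nodup_range'

lemma IsPermList.mem_iff {n : ℕ} {d : List ℕ} (hd : IsPermList n d) {z : ℕ} :
    z ∈ d ↔ 1 ≤ z ∧ z ≤ n := by
  rw [List.Perm.mem_iff hd, mem_range'_1]
  omega

lemma IsPermList.headIsMin_iff {n : ℕ} {d : List ℕ} (hd : IsPermList n d) (hn : 0 < n) :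
    HeadIsMin d ↔ d.getD 0 0 = 1 := by
  obtain ⟨a, t, rfl⟩ := exists_cons_of_length_eq_add_one
    (by rw [hd.length_eq, length_range']; omega : d.length = n - 1 + 1)
  have hnd := hd.nodup
  rw [nodup_cons] at hnd
  have h1 := (hd.mem_iff (z := 1)).2 ⟨le_rfl, hn⟩
  have ha := (hd.mem_iff (z := a)).1 mem_cons_self
  rw [headIsMin_cons_iff, getD_cons_zero]
  constructor
  · intro h
    rcases mem_cons.1 h1 with h1 | h1
    · exact h1.symm
    · exact absurd (h 1 h1) (by omega)
  · rintro rfl z hz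
    have := (hd.mem_iff (z := z)).1 (mem_cons_of_mem _ hz)
    have : z ≠ 1 := fun h => hnd.1 (h ▸ hz)
    omega

lemma IsPermList.lastIsMax_iff {n : ℕ} {d : List ℕ} (hd : IsPermList n d) (hn : 0 < n) :
    LastIsMax d ↔ d.getD (n - 1) 0 = n := by
  have hlen : d.length = n := by rw [hd.length_eq, length_range']
  obtain ⟨t, a, rfl⟩ := (eq_nil_or_concat' d).resolve_left (by rintro rfl; simp at hlen; omega)
  have hnd := hd.nodup
  rw [nodup_append] at hnd
  have hn' := (hd.mem_iff (z := n)).2 ⟨hn, le_rfl⟩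
  have ha := (hd.mem_iff (z := a)).1 (mem_append_right _ (mem_singleton_self a))
  simp only [length_append, length_singleton] at hlen
  subst hlen
  rw [lastIsMax_append_singleton_iff, Nat.add_sub_cancel,
    getD_append_right _ _ _ _ le_rfl, Nat.sub_self, getD_cons_zero]
  constructor
  · intro h
    rcases mem_append.1 hn' with hn' | hn'
    · exact absurd (h _ hn') (by omega)
    · exact (mem_singleton.1 hn').symm
  · rintro rfl z hz
    have := (hd.mem_iff (z := z)).1 (mem_append_left _ hz)
    have : z ≠ t.length + 1 := fun h => hnd.2.2 z hz _ (mem_singleton_self _) h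
    omega

def standardize (s : List ℕ) : List ℕ :=
  s.map fun x => s.countP (· ≤ x)

lemma countP_le_lt_countP_le {s : List ℕ} {x y : ℕ} (hxy : x < y) (hy : y ∈ s) :
    s.countP (· ≤ x) < s.countP (· ≤ y) := by
  induction s with
  | nil => simp at hy
  | cons a s ih =>
    have hmono : s.countP (· ≤ x) ≤ s.countP (· ≤ y) :=
      countP_mono_left fun z _ hz => by simp only [decide_eq_true_eq] at hz ⊢; omega
    simp only [countP_cons, decide_eq_true_eq]
    rcases mem_cons.1 hy with rfl | hy
    · simp only [if_pos le_rfl, if_neg (not_le.2 hxy)]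
      omega
    · have := ih hy
      split_ifs <;> omega

lemma countP_le_lt_countP_le_iff {s : List ℕ} {x y : ℕ} (hy : y ∈ s) :
    s.countP (· ≤ x) < s.countP (· ≤ y) ↔ x < y := by
  refine ⟨fun h => ?_, fun h => countP_le_lt_countP_le h hy⟩
  by_contra hyx
  exact absurd h (not_lt.2 (countP_mono_left fun z _ hz => by
    simp only [decide_eq_true_eq] at hz ⊢; omega))

lemma orderIsoList_standardize (s : List ℕ) : OrderIsoList (standardize s) s := by
  refine ⟨length_map _, fun i j hij hj => ?_⟩
  rw [standardize, length_map] at hj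
  simp only [standardize, getD_eq_getElem _ _ ((length_map _).symm ▸ hij.trans hj),
    getD_eq_getElem _ _ ((length_map _).symm ▸ hj), getD_eq_getElem _ _ (hij.trans hj),
    getD_eq_getElem _ _ hj, getElem_map]
  exact countP_le_lt_countP_le_iff (getElem_mem _)

lemma isPermList_standardize {s : List ℕ} (hs : s.Nodup) :
    IsPermList s.length (standardize s) := by
  have hnd : (standardize s).Nodup := hs.map_on fun x hx y hy hxy => by
    by_contra hne
    rcases Nat.lt_or_gt_of_ne hne with h | h
    · exact (countP_le_lt_countP_le h hy).ne hxy
    · exact (countP_le_lt_countP_le h hx).ne' hxy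
  have hsub : standardize s ⊆ range' 1 s.length := by
    intro z hz
    obtain ⟨x, hx, rfl⟩ := mem_map.1 hz
    rw [mem_range'_1]
    exact ⟨countP_pos_iff.2 ⟨x, hx, by simp⟩, Nat.lt_one_add_iff.2 (countP_le_length)⟩
  exact (hnd.subperm hsub).perm_of_length_le (by simp [standardize])

lemma standardize_mem_DLBasis {K : ℕ} {s : List ℕ} (hs : s.Nodup) (hlen : s.length = K + 1)
    (hd : descents s = 1) (hh : ¬HeadIsMin s) (hl : ¬LastIsMax s) :
    standardize s ∈ DLBasis K := by
  have hperm : IsPermList (K + 1) (standardize s) := hlen ▸ isPermList_standardize hs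
  have hiso := orderIsoList_standardize s
  refine Or.inr ⟨hperm, by rw [hiso.descents_eq hperm.nodup hs, hd], ?_, ?_⟩
  · exact fun h => hh (hiso.headIsMin_iff.1 ((hperm.headIsMin_iff K.succ_pos).2 h))
  · exact fun h =>
      hl (hiso.lastIsMax_iff.1 ((hperm.lastIsMax_iff K.succ_pos).2 (by simpa using h)))

lemma Interleave.perm {w a b : List ℕ} (h : Interleave w a b) : w.Perm (a ++ b) := by
  induction h with
  | nil => rfl
  | left _ ih => exact ih.cons _
  | right _ ih => exact (ih.cons _).trans perm_middle.symm

lemma Interleave.sublist_left {w a b : List ℕ} (h : Interleave w a b) : a <+ w := by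
  induction h with
  | nil => rfl
  | left _ ih => exact ih.cons_cons _
  | right _ ih => exact ih.cons _

lemma Interleave.sublist_right {w a b : List ℕ} (h : Interleave w a b) : b <+ w := by
  induction h with
  | nil => rfl
  | left _ ih => exact ih.cons _
  | right _ ih => exact ih.cons_cons _

lemma descents_le_one_of_sublist_append {A B s : List ℕ} (hA : A.Pairwise (· ≤ ·))
    (hB : B.Pairwise (· ≤ ·)) (hs : s <+ A ++ B) : descents s ≤ 1 := by
  obtain ⟨s₁, s₂, rfl, h₁, h₂⟩ := sublist_append_iff.1 hs
  exact descents_append_le_one_of_pairwise (hA.sublist h₁) (hB.sublist h₂)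

lemma length_le_of_not_headIsMin_of_not_lastIsMax {pre w m post s : List ℕ}
    (hτ : (pre ++ w ++ post).Pairwise (· < ·)) (hm : m.Perm w) (hs : s <+ pre ++ m ++ post)
    (hh : ¬HeadIsMin s) (hl : ¬LastIsMax s) : s.length ≤ w.length := by
  rw [pairwise_append, pairwise_append] at hτ
  obtain ⟨⟨hpre, -, hpw⟩, hpost, hwp⟩ := hτ
  obtain ⟨s₁₂, s₃, rfl, h₁₂, h₃⟩ := sublist_append_iff.1 hs
  obtain ⟨s₁, s₂, rfl, h₁, h₂⟩ := sublist_append_iff.1 h₁₂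
  have hs₂ : ∀ z ∈ s₂, z ∈ w := fun z hz => hm.subset (h₂.subset hz)
  obtain rfl : s₁ = [] := by
    rcases s₁ with _ | ⟨a, r⟩
    · rfl
    refine absurd ?_ hh
    have ha : a ∈ pre := h₁.subset mem_cons_self
    rw [cons_append, cons_append, headIsMin_cons_iff]
    intro z hz
    rcases mem_append.1 hz with hz | hz
    · rcases mem_append.1 hz with hz | hz
      · exact rel_of_pairwise_cons (hpre.sublist h₁) hz
      · exact hpw a ha z (hs₂ z hz)
    · exact hwp a (mem_append_left _ ha) z (h₃.subset hz)
  obtain rfl : s₃ = [] := by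
    rcases eq_nil_or_concat' s₃ with h | ⟨r, c, rfl⟩
    · exact h
    refine absurd ?_ hl
    have hc : c ∈ post := h₃.subset (mem_append_right _ (mem_singleton_self c))
    rw [← append_assoc, lastIsMax_append_singleton_iff]
    intro z hz
    rcases mem_append.1 hz with hz | hz
    · exact hwp z (mem_append_right _ (hs₂ z (by simpa using hz))) c hc
    · exact (pairwise_append.1 (hpost.sublist h₃)).2.2 z hz c (mem_singleton_self c)
  simpa [← hm.length_eq] using h₂.length_le

lemma not_isPattern_of_dlStep {K : ℕ} {τ σ b : List ℕ} (hτ : τ.Pairwise (· < ·))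
    (hstep : DLStep K τ σ) (hb : b ∈ DLBasis K) : ¬IsPattern b σ := by
  obtain ⟨pre, w, post, w₁, w₂, rfl, hwK, hI, rfl⟩ := hstep
  rintro ⟨s, hs, hiso⟩
  rcases hb with hb | ⟨hperm, -, h0, hK⟩
  · have hσ : (pre ++ (w₁ ++ w₂) ++ post).Nodup :=
      ((hI.perm.append_left pre).append_right post).nodup_iff.1 hτ.nodup
    have hb2 : descents b = 2 ∧ b.Nodup := by
      simp only [Set.mem_insert_iff, Set.mem_singleton_iff] at hb
      rcases hb with rfl | rfl | rfl <;> decide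
    have hτ' := hτ.imp le_of_lt
    have hA : (pre ++ w₁).Pairwise (· ≤ ·) :=
      hτ'.sublist ((hI.sublist_left.append_left pre).trans (sublist_append_left _ _))
    have hB : (w₂ ++ post).Pairwise (· ≤ ·) :=
      hτ'.sublist (by
        rw [append_assoc]
        exact (hI.sublist_right.append_right post).trans (sublist_append_right pre _))
    have := descents_le_one_of_sublist_append hA hB (by simpa using hs)
    rw [← hiso.descents_eq hb2.2 (hσ.sublist hs)] at this
    omega
  · have hlen : s.length = K + 1 := by rw [← hiso.1, hperm.length_eq, length_range']
    have hh : ¬HeadIsMin s := fun h =>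
      h0 ((hperm.headIsMin_iff K.succ_pos).1 (hiso.headIsMin_iff.2 h))
    have hl : ¬LastIsMax s := fun h => hK (by
      simpa using (hperm.lastIsMax_iff K.succ_pos).1 (hiso.lastIsMax_iff.2 h))
    have := length_le_of_not_headIsMin_of_not_lastIsMax hτ hI.perm.symm hs hh hl
    omega

lemma orderIsoList_321 {a b c : ℕ} (h₁ : c < b) (h₂ : b < a) :
    OrderIsoList [3, 2, 1] [a, b, c] := by
  refine ⟨rfl, fun i j hij hj => ?_⟩
  simp only [length_cons, length_nil] at hj
  interval_cases j <;> interval_cases i <;> simp <;> omega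

lemma orderIsoList_3142 {a b c d : ℕ} (h₁ : b < d) (h₂ : d < a) (h₃ : a < c) :
    OrderIsoList [3, 1, 4, 2] [a, b, c, d] := by
  refine ⟨rfl, fun i j hij hj => ?_⟩
  simp only [length_cons, length_nil] at hj
  interval_cases j <;> interval_cases i <;> simp <;> omega

lemma orderIsoList_2143 {a b c d : ℕ} (h₁ : b < a) (h₂ : a < d) (h₃ : d < c) :
    OrderIsoList [2, 1, 4, 3] [a, b, c, d] := by
  refine ⟨rfl, fun i j hij hj => ?_⟩
  simp only [length_cons, length_nil] at hj
  interval_cases j <;> interval_cases i <;> simp <;> omega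

lemma exists_isPattern_of_sublist_of_two_descents {K x y z w : ℕ} {σ : List ℕ}
    (hs : [x, y, z, w] <+ σ) (hnd : [x, y, z, w].Nodup) (hyx : y < x) (hwz : w < z) :
    ∃ b ∈ DLBasis K, IsPattern b σ := by
  simp only [nodup_cons, mem_cons, not_or, mem_nil_iff, not_false_eq_true, and_true,
    nodup_nil] at hnd
  by_cases hzx : z < x
  · exact ⟨_, Or.inl (by simp), [x, z, w], (by simp : [x, z, w] <+ [x, y, z, w]).trans hs,
      orderIsoList_321 hwz hzx⟩
  by_cases hwy : w < y
  · exact ⟨_, Or.inl (by simp), [x, y, w], (by simp : [x, y, w] <+ [x, y, z, w]).trans hs,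
      orderIsoList_321 hwy hyx⟩
  by_cases hwx : w < x
  · exact ⟨_, Or.inl (by simp), _, hs, orderIsoList_3142 (by omega) hwx (by omega)⟩
  · exact ⟨_, Or.inl (by simp), _, hs, orderIsoList_2143 hyx (by omega) hwz⟩

lemma exists_isPattern_of_two_le_descents {K : ℕ} {σ : List ℕ} (hnd : σ.Nodup)
    (h : 2 ≤ descents σ) : ∃ b ∈ DLBasis K, IsPattern b σ := by
  obtain ⟨u, x, y, v, rfl, hyx, hu⟩ := exists_first_descent (by omega : 0 < descents σ)
  rw [descents_append_cons, descents_cons_cons, if_pos hyx, descents_eq_zero_iff.2 hu] at h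
  obtain ⟨u', z, w, v', huv, hwz, -⟩ := exists_first_descent (by omega : 0 < descents (y :: v))
  rcases u' with _ | ⟨y', u'⟩
  · obtain ⟨rfl, rfl⟩ : y = z ∧ v = w :: v' := by simpa using huv
    exact ⟨_, Or.inl (by simp), [x, y, w], by simp, orderIsoList_321 hwz hyx⟩
  · obtain ⟨rfl, rfl⟩ : y = y' ∧ v = u' ++ z :: w :: v' := by simpa using huv
    have hs : [x, y, z, w] <+ u ++ x :: y :: (u' ++ z :: w :: v') := by simp
    exact exists_isPattern_of_sublist_of_two_descents hs (hnd.sublist hs) hyx hwz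

lemma Interleave.nil_left (l : List ℕ) : Interleave l [] l := by
  induction l with
  | nil => exact .nil
  | cons _ _ ih => exact ih.right

lemma Interleave.nil_right (l : List ℕ) : Interleave l l [] := by
  induction l with
  | nil => exact .nil
  | cons _ _ ih => exact ih.left

lemma interleave_merge : ∀ a b : List ℕ, Interleave (a.merge b) a b
  | [], b => by simpa using Interleave.nil_left b
  | a :: l, [] => by simpa using Interleave.nil_right (a :: l)
  | a :: l, b :: r => by
    rw [cons_merge_cons]
    split
    · exact (interleave_merge l (b :: r)).left
    · exact (interleave_merge (a :: l) r).right

lemma dlStep_self (K : ℕ) (τ : List ℕ) : DLStep K τ τ :=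
  ⟨τ, [], [], [], [], by simp, by simp, .nil, by simp⟩

lemma eq_false_of_mem_dropWhile {α : Type*} [Preorder α] {p : α → Bool} {l : List α}
    (hl : l.Pairwise (· ≤ ·)) (hp : ∀ a b, a ≤ b → p b → p a) {z : α}
    (hz : z ∈ l.dropWhile p) : p z = false := by
  induction l with
  | nil => simp at hz
  | cons a l ih =>
    rw [dropWhile_cons] at hz
    split_ifs at hz with ha
    · exact ih hl.of_cons hz
    · rcases mem_cons.1 hz with rfl | hz
      · simpa using ha
      · exact Bool.eq_false_iff.2 fun hpz => ha (hp a z (rel_of_pairwise_cons hl hz) hpz)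

lemma pairwise_merge_le {a b : List ℕ} (ha : a.Pairwise (· ≤ ·)) (hb : b.Pairwise (· ≤ ·)) :
    (a.merge b).Pairwise (· ≤ ·) := by
  simpa using pairwise_merge (le := fun x y : ℕ => decide (x ≤ y))
    (fun _ _ _ => by simpa using le_trans) (fun x y => by simpa using le_total x y) a b
    (by simpa using ha) (by simpa using hb)

lemma dlStep_of_append {K x y : ℕ} {τ A B : List ℕ} (hτ : τ.Pairwise (· ≤ ·))
    (hAB : (A ++ B).Perm τ) (hA : A.Pairwise (· ≤ ·)) (hB : B.Pairwise (· ≤ ·))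
    (hAx : ∀ a ∈ A, a ≤ x) (hBy : ∀ b ∈ B, y ≤ b)
    (hK : (A.dropWhile (· < y)).length + (B.takeWhile (· ≤ x)).length ≤ K) :
    DLStep K τ (A ++ B) := by
  set pre := A.takeWhile (· < y)
  set w₁ := A.dropWhile (· < y)
  set w₂ := B.takeWhile (· ≤ x)
  set post := B.dropWhile (· ≤ x)
  have hσ : A ++ B = pre ++ (w₁ ++ w₂) ++ post := by
    simp only [pre, w₁, w₂, post, append_assoc, takeWhile_append_dropWhile,
      ← append_assoc (takeWhile _ A)]
  have hpre : ∀ a ∈ pre, a < y := fun a ha => by simpa using mem_takeWhile_imp ha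
  have hw₁ : ∀ b ∈ w₁, y ≤ b := fun b hb => by
    simpa using eq_false_of_mem_dropWhile hA
      (fun a b hab => by simp only [decide_eq_true_eq]; omega) hb
  have hw₂ : ∀ b ∈ w₂, b ≤ x := fun b hb => by simpa using mem_takeWhile_imp hb
  have hpost : ∀ c ∈ post, x < c := fun c hc => by
    simpa using eq_false_of_mem_dropWhile hB
      (fun a b hab => by simp only [decide_eq_true_eq]; omega) hc
  have hsorted : (pre ++ w₁.merge w₂ ++ post).Pairwise (· ≤ ·) := by
    simp only [pairwise_append, mem_append, mem_merge]
    refine ⟨⟨hA.sublist (takeWhile_sublist _),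
      pairwise_merge_le (hA.sublist (dropWhile_sublist _)) (hB.sublist (takeWhile_sublist _)),
      fun a ha b hb => ?_⟩, hB.sublist (dropWhile_sublist _), fun b hb c hc => ?_⟩
    · rcases hb with hb | hb
      · exact (hpre a ha).le.trans (hw₁ b hb)
      · exact (hpre a ha).le.trans (hBy b ((takeWhile_sublist _).subset hb))
    · have := hpost c hc
      rcases hb with hb | hb | hb
      · exact (hpre b hb).le.trans (hBy c ((dropWhile_sublist _).subset hc))
      · exact (hAx b ((dropWhile_sublist _).subset hb)).trans this.le
      · exact (hw₂ b hb).trans this.le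
  refine ⟨pre, w₁.merge w₂, post, w₁, w₂, ?_, by simpa using hK, interleave_merge w₁ w₂, hσ⟩
  refine Perm.eq_of_pairwise' hτ hsorted (hAB.symm.trans ?_)
  rw [hσ]
  exact ((merge_perm_append _).symm.append_left pre).append_right post

lemma dropWhile_append_cons_of_not {p : ℕ → Bool} {x : ℕ} (hx : p x = false) (u v : List ℕ) :
    (u ++ x :: v).dropWhile p = u.dropWhile p ++ x :: v := by
  rw [dropWhile_append]
  split_ifs with h
  · rw [isEmpty_iff.1 h, nil_append, dropWhile_cons_of_neg (by simp [hx])]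
  · rfl

lemma exists_sublists_length_eq {K x y : ℕ} {u v : List ℕ} (hK : 1 ≤ K)
    (h : K + 1 ≤ (u ++ x :: y :: v).length) :
    ∃ u' v', u' <+ u ∧ v' <+ v ∧ (u' ++ x :: y :: v').length = K + 1 := by
  obtain ⟨u', v', heq, hu, hv⟩ := sublist_append_iff.1 (take_sublist (K - 1) (u ++ v))
  refine ⟨u', v', hu, hv, ?_⟩
  have := congrArg length heq
  simp only [length_append, length_cons, length_take] at h this ⊢
  omega

lemma exists_isPattern_of_wide_window {K x y : ℕ} {u v : List ℕ} (hK : 1 ≤ K)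
    (hnd : (u ++ x :: y :: v).Nodup) (hA : (u ++ [x]).Pairwise (· ≤ ·))
    (hB : (y :: v).Pairwise (· ≤ ·)) (hyx : y < x)
    (hwide : K < ((u ++ [x]).dropWhile (· < y)).length + ((y :: v).takeWhile (· ≤ x)).length) :
    ∃ b ∈ DLBasis K, IsPattern b (u ++ x :: y :: v) := by
  rw [dropWhile_append_cons_of_not (by simpa using hyx.le),
    takeWhile_cons_of_pos (by simpa using hyx.le)] at hwide
  obtain ⟨u', v', hu', hv', hlen⟩ :=
    exists_sublists_length_eq (u := u.dropWhile (· < y)) (v := v.takeWhile (· ≤ x)) (x := x)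
      (y := y) hK (by simp only [length_append, length_cons, length_nil] at hwide ⊢; omega)
  have hu : u' <+ u := hu'.trans (dropWhile_sublist _)
  have hv : v' <+ v := hv'.trans (takeWhile_sublist _)
  have hs : u' ++ x :: y :: v' <+ u ++ x :: y :: v := hu.append ((hv.cons_cons y).cons_cons x)
  have hyu : y ∉ u := fun h => (nodup_append.1 hnd).2.2 y h y (by simp) rfl
  have hxv : x ∉ v := fun h => (nodup_cons.1 (nodup_append.1 hnd).2.1).1 (mem_cons_of_mem y h)
  have hy_lt : ∀ a ∈ u', y < a := fun a ha => by
    have := eq_false_of_mem_dropWhile (hA.sublist (sublist_append_left u [x]))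
      (fun a b hab => by simp only [decide_eq_true_eq]; omega) (hu'.subset ha)
    have : a ≠ y := fun h => hyu (h ▸ hu.subset ha)
    simp only [decide_eq_false_iff_not] at *
    omega
  have hlt_x : ∀ b ∈ v', b < x := fun b hb => by
    have := mem_takeWhile_imp (hv'.subset hb)
    have : b ≠ x := fun h => hxv (h ▸ hv.subset hb)
    simp only [decide_eq_true_eq] at *
    omega
  refine ⟨_, standardize_mem_DLBasis (hnd.sublist hs) hlen ?_ ?_ ?_, _, hs,
    orderIsoList_standardize _⟩
  · rw [← singleton_append, ← append_assoc]
    exact descents_append_eq_one_of_pairwise (hA.sublist (hu.append_right [x]))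
      (hB.sublist (hv.cons_cons y)) (mem_append_right _ (mem_singleton_self x)) mem_cons_self hyx
  · rcases u' with _ | ⟨a, u'⟩
    · rw [nil_append, headIsMin_cons_iff]
      exact fun h => lt_asymm hyx (h y mem_cons_self)
    · rw [cons_append, headIsMin_cons_iff]
      exact fun h => lt_asymm (hy_lt a mem_cons_self) (h y (by simp))
  · rcases eq_nil_or_concat' v' with rfl | ⟨v', c, rfl⟩
    · rw [show u' ++ [x, y] = u' ++ [x] ++ [y] by simp, lastIsMax_append_singleton_iff]
      exact fun h => lt_asymm hyx (h x (by simp))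
    · rw [show u' ++ x :: y :: (v' ++ [c]) = u' ++ x :: y :: v' ++ [c] by simp,
        lastIsMax_append_singleton_iff]
      exact fun h => lt_asymm (hlt_x c (by simp)) (h x (by simp))

lemma dlStep_of_forall_not_isPattern {K : ℕ} {τ σ : List ℕ} (hK : 1 ≤ K)
    (hτ : τ.Pairwise (· < ·)) (hσ : σ.Perm τ) (havoid : ∀ b ∈ DLBasis K, ¬IsPattern b σ) :
    DLStep K τ σ := by
  have hnd : σ.Nodup := hσ.nodup_iff.2 hτ.nodup
  have hτ' := hτ.imp le_of_lt
  have hdesc : descents σ ≤ 1 := by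
    by_contra h
    obtain ⟨b, hb, hpat⟩ := exists_isPattern_of_two_le_descents (K := K) hnd (by omega)
    exact havoid b hb hpat
  rcases Nat.lt_or_eq_of_le hdesc with h0 | h1
  · rw [hσ.eq_of_pairwise' (descents_eq_zero_iff.1 (by omega)) hτ']
    exact dlStep_self K τ
  obtain ⟨u, x, y, v, rfl, hyx, hA, hB⟩ := exists_eq_append_of_descents_eq_one h1
  by_cases hwide : K < ((u ++ [x]).dropWhile (· < y)).length + ((y :: v).takeWhile (· ≤ x)).length
  · obtain ⟨b, hb, hpat⟩ := exists_isPattern_of_wide_window hK hnd hA hB hyx hwide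
    exact absurd hpat (havoid b hb)
  have hAx : ∀ a ∈ u ++ [x], a ≤ x := fun a ha => by
    rcases mem_append.1 ha with ha | ha
    · exact (pairwise_append.1 hA).2.2 a ha x (mem_singleton_self x)
    · exact (mem_singleton.1 ha).le
  have hBy : ∀ b ∈ y :: v, y ≤ b := fun b hb => by
    rcases mem_cons.1 hb with rfl | hb
    · exact le_rfl
    · exact rel_of_pairwise_cons hB hb
  simpa using dlStep_of_append hτ' (by simpa using hσ) hA hB hAx hBy (not_lt.1 hwide)

lemma getD_zero_le_of_pairwise {l : List ℕ} (hl : l.Pairwise (· ≤ ·)) {z : ℕ} (hz : z ∈ l) :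
    l.getD 0 0 ≤ z := by
  rcases l with _ | ⟨a, l⟩
  · simp at hz
  rcases mem_cons.1 hz with rfl | hz
  · exact le_rfl
  · exact rel_of_pairwise_cons hl hz

lemma le_getD_of_pairwise {l : List ℕ} (hl : l.Pairwise (· ≤ ·)) {z : ℕ} (hz : z ∈ l) :
    z ≤ l.getD (l.length - 1) 0 := by
  obtain ⟨l, c, rfl⟩ := (eq_nil_or_concat' l).resolve_left (ne_nil_of_mem hz)
  rw [length_append, length_singleton, Nat.add_sub_cancel, getD_append_right _ _ _ _ le_rfl,
    Nat.sub_self, getD_cons_zero]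
  rcases mem_append.1 hz with hz | hz
  · exact (pairwise_append.1 hl).2.2 z hz c (mem_singleton_self c)
  · exact (mem_singleton.1 hz).le

lemma getD_mem_of_lt {l : List ℕ} {i : ℕ} (h : i < l.length) : l.getD i 0 ∈ l := by
  rw [getD_eq_getElem _ _ h]
  exact getElem_mem h

/-- The set `D` of the statement. -/
def oneDescentBasis (K : ℕ) : Set (List ℕ) :=
  {d | IsPermList (K + 1) d ∧ descents d = 1 ∧ d.getD 0 0 ≠ 1 ∧ d.getD K 0 ≠ K + 1}

def twoRunPerm (n : ℕ) (S : Finset ℕ) : List ℕ :=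
  S.sort ++ (Finset.Icc 1 n \ S).sort

lemma isPermList_twoRunPerm {n : ℕ} {S : Finset ℕ} (hS : S ⊆ Finset.Icc 1 n) :
    IsPermList n (twoRunPerm n S) := by
  refine perm_of_nodup_nodup_toFinset_eq ?_ nodup_range' ?_
  · refine nodup_append.2 ⟨Finset.sort_nodup _ _, Finset.sort_nodup _ _, fun a ha b hb => ?_⟩
    rw [Finset.mem_sort] at ha hb
    exact fun hab => (Finset.mem_sdiff.1 hb).2 (hab ▸ ha)
  · rw [twoRunPerm, toFinset_append, Finset.sort_toFinset, Finset.sort_toFinset,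
      Finset.union_sdiff_of_subset hS, toFinset_range'_1_1]

lemma twoRunPerm_mem_oneDescentBasis {K : ℕ} (hK : 1 ≤ K) {B : Finset ℕ}
    (hB : B ⊆ Finset.Icc 2 K) : twoRunPerm (K + 1) (insert (K + 1) B) ∈ oneDescentBasis K := by
  set S := insert (K + 1) B
  have hSmem : ∀ z ∈ S, 2 ≤ z ∧ z ≤ K + 1 := fun z hz => by
    rcases Finset.mem_insert.1 hz with rfl | hz
    · omega
    · have := Finset.mem_Icc.1 (hB hz); omega
  have hS : S ⊆ Finset.Icc 1 (K + 1) := fun z hz => by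
    have := hSmem z hz; rw [Finset.mem_Icc]; omega
  have h1 : 1 ∈ Finset.Icc 1 (K + 1) \ S :=
    Finset.mem_sdiff.2 ⟨Finset.mem_Icc.2 ⟨le_rfl, by omega⟩, fun h => by have := hSmem 1 h; omega⟩
  have hperm := isPermList_twoRunPerm hS
  have hlen : S.card + (Finset.Icc 1 (K + 1) \ S).card = K + 1 := by
    simpa [twoRunPerm] using hperm.length_eq
  have hS0 : 0 < S.card := Finset.card_pos.2 ⟨K + 1, Finset.mem_insert_self _ _⟩
  have hT0 : 0 < (Finset.Icc 1 (K + 1) \ S).card := Finset.card_pos.2 ⟨1, h1⟩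
  refine ⟨hperm, ?_, ?_, ?_⟩
  · exact descents_append_eq_one_of_pairwise (Finset.pairwise_sort _ _) (Finset.pairwise_sort _ _)
      ((Finset.mem_sort _).2 (Finset.mem_insert_self _ _)) ((Finset.mem_sort _).2 h1) (by omega)
  · have hi : 0 < S.sort.length := by rw [Finset.length_sort]; exact hS0
    rw [twoRunPerm, getD_append _ _ _ _ hi]
    have := hSmem _ ((Finset.mem_sort _).1 (getD_mem_of_lt hi))
    omega
  · have hi : K - S.card < (Finset.Icc 1 (K + 1) \ S).sort.length := by
      rw [Finset.length_sort]; omega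
    rw [twoRunPerm, getD_append_right _ _ _ _ (by rw [Finset.length_sort]; omega),
      Finset.length_sort]
    exact fun h => (Finset.mem_sdiff.1 ((Finset.mem_sort _).1 (getD_mem_of_lt hi))).2
      (by rw [h]; exact Finset.mem_insert_self _ _)

lemma toFinset_takeWhile_twoRunPerm {n : ℕ} {S : Finset ℕ} (hn : 1 ≤ n) (h1 : 1 ∉ S) :
    ((twoRunPerm n S).takeWhile (· ≠ 1)).toFinset = S := by
  have h1T : 1 ∈ (Finset.Icc 1 n \ S).sort :=
    (Finset.mem_sort _).2 (Finset.mem_sdiff.2 ⟨Finset.mem_Icc.2 ⟨le_rfl, hn⟩, h1⟩)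
  obtain ⟨c, T, hT⟩ := exists_cons_of_ne_nil (ne_nil_of_mem h1T)
  have hc : c = 1 := by
    have := getD_zero_le_of_pairwise (Finset.pairwise_sort _ _) h1T
    have hcmem : c ∈ Finset.Icc 1 n \ S := (Finset.mem_sort _).1 (hT ▸ mem_cons_self)
    rw [hT, getD_cons_zero] at this
    have := (Finset.mem_Icc.1 (Finset.mem_sdiff.1 hcmem).1).1
    omega
  rw [twoRunPerm, takeWhile_append_of_pos, hT, hc, takeWhile_cons_of_neg (by simp), append_nil,
    Finset.sort_toFinset]
  intro a ha
  have : a ≠ 1 := fun h => h1 (h ▸ (Finset.mem_sort _).1 ha)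
  simpa using this

lemma exists_twoRunPerm_eq {K : ℕ} {d : List ℕ} (hd : IsPermList (K + 1) d)
    (hdesc : descents d = 1) (h0 : d.getD 0 0 ≠ 1) (hK : d.getD K 0 ≠ K + 1) :
    ∃ B ⊆ Finset.Icc 2 K, twoRunPerm (K + 1) (insert (K + 1) B) = d := by
  obtain ⟨u, x, y, v, rfl, -, hA, hB⟩ := exists_eq_append_of_descents_eq_one hdesc
  rw [show u ++ x :: y :: v = u ++ [x] ++ y :: v by simp] at hd h0 hK ⊢
  set A := u ++ [x]
  set C := y :: v
  have hnd := nodup_append.1 hd.nodup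
  have hlen : A.length + C.length = K + 1 := by simpa using hd.length_eq
  have hA0 : 0 < A.length := by simp [A]
  have hC0 : C.length - 1 < C.length := by simp [C]
  have h1A : 1 ∉ A := fun h => by
    have := getD_zero_le_of_pairwise hA h
    have := (hd.mem_iff.1 (mem_append_left C (getD_mem_of_lt hA0))).1
    rw [getD_append _ _ _ _ hA0] at h0
    omega
  have hKC : K + 1 ∉ C := fun h => by
    have := le_getD_of_pairwise hB h
    have := (hd.mem_iff.1 (mem_append_right A (getD_mem_of_lt hC0))).2
    rw [getD_append_right _ _ _ _ (by omega), show K - A.length = C.length - 1 by omega] at hK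
    omega
  have hKA : K + 1 ∈ A := (mem_append.1 (hd.mem_iff.2 ⟨by omega, le_rfl⟩)).resolve_right hKC
  have hC : Finset.Icc 1 (K + 1) \ A.toFinset = C.toFinset := by
    ext z
    simp only [Finset.mem_sdiff, Finset.mem_Icc, mem_toFinset, ← hd.mem_iff, mem_append]
    exact ⟨fun h => h.1.resolve_left h.2, fun h => ⟨Or.inr h, fun hA => hnd.2.2 z hA z h rfl⟩⟩
  refine ⟨A.toFinset.erase (K + 1), fun z hz => ?_, ?_⟩
  · obtain ⟨hzK, hzA⟩ := Finset.mem_erase.1 hz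
    rw [mem_toFinset] at hzA
    have := hd.mem_iff.1 (mem_append_left C hzA)
    have : z ≠ 1 := fun h => h1A (h ▸ hzA)
    rw [Finset.mem_Icc]
    omega
  · rw [Finset.insert_erase (mem_toFinset.2 hKA), twoRunPerm, hC, (toFinset_sort _ hnd.1).2 hA,
      (toFinset_sort _ hnd.2.1).2 hB]

lemma oneDescentBasis_eq_image {K : ℕ} (hK : 1 ≤ K) :
    oneDescentBasis K =
      (fun B => twoRunPerm (K + 1) (insert (K + 1) B)) '' ↑(Finset.Icc 2 K).powerset := by
  ext d
  simp only [Set.mem_image, Finset.coe_powerset, Set.mem_preimage, Set.mem_powerset_iff,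
    Finset.coe_subset]
  constructor
  · rintro ⟨hperm, hdesc, h0, hK⟩
    exact exists_twoRunPerm_eq hperm hdesc h0 hK
  · rintro ⟨B, hB, rfl⟩
    exact twoRunPerm_mem_oneDescentBasis hK hB

lemma ncard_oneDescentBasis {K : ℕ} (hK : 1 ≤ K) : (oneDescentBasis K).ncard = 2 ^ (K - 1) := by
  have hK1 : ∀ {B : Finset ℕ}, B ⊆ Finset.Icc 2 K → 1 ∉ insert (K + 1) B ∧ K + 1 ∉ B :=
    fun hB => ⟨fun h => by
      rcases Finset.mem_insert.1 h with h | h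
      · omega
      · have := Finset.mem_Icc.1 (hB h); omega,
      fun h => by have := Finset.mem_Icc.1 (hB h); omega⟩
  have hinj : Set.InjOn (fun B => twoRunPerm (K + 1) (insert (K + 1) B))
      ↑(Finset.Icc 2 K).powerset := by
    intro B₁ hB₁ B₂ hB₂ h
    simp only [Finset.coe_powerset, Set.mem_preimage, Set.mem_powerset_iff, Finset.coe_subset]
      at hB₁ hB₂
    have := congrArg (fun l => (l.takeWhile (· ≠ 1)).toFinset) h
    simp only at this
    rw [toFinset_takeWhile_twoRunPerm (n := K + 1) (by omega) (hK1 hB₁).1,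
      toFinset_takeWhile_twoRunPerm (n := K + 1) (by omega) (hK1 hB₂).1] at this
    rw [← Finset.erase_insert (hK1 hB₁).2, ← Finset.erase_insert (hK1 hB₂).2, this]
  rw [oneDescentBasis_eq_image hK, hinj.ncard_image, Set.ncard_coe_finset,
    Finset.card_powerset, Nat.card_Icc, show K + 1 - 2 = K - 1 by omega]

lemma ncard_DLBasis {K : ℕ} (hK : 1 ≤ K) : (DLBasis K).ncard = 3 + 2 ^ (K - 1) := by
  have hdisj : Disjoint ({[3, 2, 1], [3, 1, 4, 2], [2, 1, 4, 3]} : Set (List ℕ))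
      (oneDescentBasis K) := by
    rw [Set.disjoint_left]
    rintro d hd ⟨-, hdesc, -⟩
    simp only [Set.mem_insert_iff, Set.mem_singleton_iff] at hd
    rcases hd with rfl | rfl | rfl <;> simp [descents] at hdesc
  have hfin : (oneDescentBasis K).Finite := by
    rw [oneDescentBasis_eq_image hK]
    exact (Finset.finite_toSet _).image _
  rw [DLBasis, ← oneDescentBasis, Set.ncard_union_eq hdisj (Set.toFinite _) hfin,
    ncard_oneDescentBasis hK, Set.ncard_eq_three.2 ⟨_, _, _, by simp, by simp, by simp, rfl⟩]

theorem stmt11 (K : ℕ) (hK : 2 ≤ K) :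
    (∀ n l, IsPermList n l →
      (DLStep K (List.range' 1 n) l ↔ ∀ b ∈ DLBasis K, ¬ IsPattern b l)) ∧
    (DLBasis K).ncard = 3 + 2 ^ (K - 1) :=
  ⟨fun _ _ hl => ⟨fun h _ hb => not_isPattern_of_dlStep pairwise_lt_range' h hb,
    dlStep_of_forall_not_isPattern (by omega) pairwise_lt_range' hl⟩, ncard_DLBasis (by omega)⟩
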